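/- Descent lemma with biased and noisy gradients: Let F be L-smooth, let w⁺ = w - η g where g = ∇F(w) + b + n with E[n] = 0, E‖n‖² ≤ M‖∇F(w) + b‖² + σ², and ‖b‖² ≤ m‖∇F(w)‖² + ζ² with 0 ≤ m < 1. If 0 < η ≤ 1/((M+1)L), then E[F(w⁺)] - F(w) ≤ (η(m-1)/2)‖∇F(w)‖² + (η/2)ζ² + (η²L/2)σ². -/

import Mathlib

/-!
Along a segment `t ↦ x + t • v` the derivative of `F` exceeds `⟪∇F x, v⟫` by at most
`L t ‖v‖²`, whence `F y ≤ F x + ⟪∇F x, y - x⟫ + L/2 ‖y - x‖²`. For the step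
`y = w - η (c + n)` with `c = ∇F w + b`, averaging over the zero-mean noise kills the cross
terms: `E F(w⁺) ≤ F w - η ⟪∇F w, c⟫ + L η²/2 (‖c‖² + E‖n‖²)`. The step-size condition absorbs
the noise variance into `η/2 ‖c‖²`, and `-⟪g, g + b⟫ + ½‖g + b‖² = ½ (‖b‖² - ‖g‖²)` turns the
bias bound into the claim.
-/

open MeasureTheory

local notation "⟪" x ", " y "⟫" => @inner ℝ _ _ x y

section Smooth

variable {E : Type*} [NormedAddCommGroup E] [InnerProductSpace ℝ E] [CompleteSpace E]
  {F : E → ℝ}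

theorem HasGradientAt.hasDerivAt_comp_add_smul {x v : E} {t : ℝ} {f' : E}
    (hF : HasGradientAt F f' (x + t • v)) :
    HasDerivAt (fun s : ℝ => F (x + s • v)) ⟪f', v⟫ t := by
  have hline : HasDerivAt (fun s : ℝ => x + s • v) v t := by
    simpa using ((hasDerivAt_id t).smul_const v).const_add x
  have h := hF.hasFDerivAt.comp_hasDerivAt t hline
  rw [InnerProductSpace.toDual_apply_apply] at h
  exact h

theorem le_add_inner_gradient_add_sq_of_lipschitz_gradient {L : ℝ} (hdiff : Differentiable ℝ F)
    (hlip : ∀ x y, ‖gradient F x - gradient F y‖ ≤ L * ‖x - y‖) (x y : E) :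
    F y ≤ F x + ⟪gradient F x, y - x⟫ + L / 2 * ‖y - x‖ ^ 2 := by
  set v := y - x
  have hderiv (t : ℝ) :
      HasDerivAt (fun s : ℝ => F (x + s • v)) ⟪gradient F (x + t • v), v⟫ t :=
    (hdiff _).hasGradientAt.hasDerivAt_comp_add_smul
  have hbound : ∀ t ∈ Set.Ico (0 : ℝ) 1,
      ⟪gradient F (x + t • v), v⟫ ≤ ⟪gradient F x, v⟫ + 2 * t * (L / 2 * ‖v‖ ^ 2) := by
    rintro t ⟨ht0, -⟩
    have hcs : ⟪gradient F (x + t • v) - gradient F x, v⟫ ≤ L * (t * ‖v‖) * ‖v‖ := calc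
      _ ≤ ‖gradient F (x + t • v) - gradient F x‖ * ‖v‖ := real_inner_le_norm _ _
      _ ≤ L * (t * ‖v‖) * ‖v‖ := by
        gcongr
        simpa [norm_smul, abs_of_nonneg ht0] using hlip (x + t • v) x
    rw [inner_sub_left] at hcs
    linarith
  have hquad (t : ℝ) : HasDerivAt
      (fun s : ℝ => F x + s * ⟪gradient F x, v⟫ + s ^ 2 * (L / 2 * ‖v‖ ^ 2))
      (⟪gradient F x, v⟫ + 2 * t * (L / 2 * ‖v‖ ^ 2)) t := by
    refine (((hasDerivAt_mul_const _).const_add (F x)).add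
      ((hasDerivAt_pow 2 t).mul_const (L / 2 * ‖v‖ ^ 2))).congr_deriv ?_
    norm_num
  have h := image_le_of_deriv_right_le_deriv_boundary
    (fun t _ => (hderiv t).continuousAt.continuousWithinAt)
    (fun t _ => (hderiv t).hasDerivWithinAt) (by simp)
    (fun t _ => (hquad t).continuousAt.continuousWithinAt)
    (fun t _ => (hquad t).hasDerivWithinAt) hbound (Set.right_mem_Icc.mpr zero_le_one)
  simpa [v] using h

end Smooth

section Noise

variable {E : Type*} [NormedAddCommGroup E] [InnerProductSpace ℝ E]
  {Ω : Type*} [MeasurableSpace Ω] {μ : Measure Ω} {n : Ω → E}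

theorem integrable_norm_const_add_sq [IsFiniteMeasure μ] (hn : Integrable n μ)
    (hn_sq : Integrable (fun ω => ‖n ω‖ ^ 2) μ) (c : E) :
    Integrable (fun ω => ‖c + n ω‖ ^ 2) μ := by
  simp_rw [norm_add_sq_real]
  exact ((integrable_const _).add ((hn.const_inner c).const_mul 2)).add hn_sq

theorem integral_norm_const_add_sq [CompleteSpace E] [IsProbabilityMeasure μ]
    (hn : Integrable n μ) (hn_mean : ∫ ω, n ω ∂μ = 0)
    (hn_sq : Integrable (fun ω => ‖n ω‖ ^ 2) μ) (c : E) :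
    ∫ ω, ‖c + n ω‖ ^ 2 ∂μ = ‖c‖ ^ 2 + ∫ ω, ‖n ω‖ ^ 2 ∂μ := by
  have hcross : Integrable (fun ω => 2 * ⟪c, n ω⟫) μ := (hn.const_inner c).const_mul 2
  have hlin : Integrable (fun ω => ‖c‖ ^ 2 + 2 * ⟪c, n ω⟫) μ := (integrable_const _).add hcross
  simp_rw [norm_add_sq_real]
  rw [integral_add hlin hn_sq,
    integral_add (integrable_const _) hcross, integral_const_mul, integral_inner hn, hn_mean]
  simp

theorem integral_inner_const_add [CompleteSpace E] [IsProbabilityMeasure μ] (hn : Integrable n μ)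
    (hn_mean : ∫ ω, n ω ∂μ = 0) (g c : E) :
    ∫ ω, ⟪g, c + n ω⟫ ∂μ = ⟪g, c⟫ := by
  rw [integral_inner (integrable_const_add_iff.mpr hn), integral_add (integrable_const c) hn,
    hn_mean]
  simp

end Noise

theorem integral_le_of_lipschitz_gradient_of_noisy_step
    {E : Type*} [NormedAddCommGroup E] [InnerProductSpace ℝ E] [CompleteSpace E]
    {Ω : Type*} [MeasurableSpace Ω] {μ : Measure Ω} [IsProbabilityMeasure μ]
    {F : E → ℝ} {L : ℝ} (hdiff : Differentiable ℝ F)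
    (hlip : ∀ x y, ‖gradient F x - gradient F y‖ ≤ L * ‖x - y‖)
    {n : Ω → E} (hn : Integrable n μ) (hn_mean : ∫ ω, n ω ∂μ = 0)
    (hn_sq : Integrable (fun ω => ‖n ω‖ ^ 2) μ) (x c : E) (η : ℝ)
    (hF_int : Integrable (fun ω => F (x - η • (c + n ω))) μ) :
    ∫ ω, F (x - η • (c + n ω)) ∂μ ≤
      F x - η * ⟪gradient F x, c⟫ + L * η ^ 2 / 2 * (‖c‖ ^ 2 + ∫ ω, ‖n ω‖ ^ 2 ∂μ) := by
  have hpoint (ω : Ω) : F (x - η • (c + n ω)) ≤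
      F x - η * ⟪gradient F x, c + n ω⟫ + L * η ^ 2 / 2 * ‖c + n ω‖ ^ 2 := by
    have h := le_add_inner_gradient_add_sq_of_lipschitz_gradient hdiff hlip x
      (x - η • (c + n ω))
    rw [sub_sub_cancel_left, inner_neg_right, real_inner_smul_right, norm_neg, norm_smul,
      mul_pow, Real.norm_eq_abs, sq_abs] at h
    linarith
  have hinner : Integrable (fun ω => ⟪gradient F x, c + n ω⟫) μ :=
    (integrable_const_add_iff.mpr hn).const_inner _
  have hsq := integrable_norm_const_add_sq hn hn_sq c
  have hlin : Integrable (fun ω => F x - η * ⟪gradient F x, c + n ω⟫) μ :=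
    (integrable_const _).sub (hinner.const_mul η)
  calc ∫ ω, F (x - η • (c + n ω)) ∂μ
      ≤ ∫ ω, (F x - η * ⟪gradient F x, c + n ω⟫ + L * η ^ 2 / 2 * ‖c + n ω‖ ^ 2) ∂μ :=
        integral_mono hF_int (hlin.add (hsq.const_mul _)) hpoint
    _ = F x - η * ∫ ω, ⟪gradient F x, c + n ω⟫ ∂μ
          + L * η ^ 2 / 2 * ∫ ω, ‖c + n ω‖ ^ 2 ∂μ := by
      rw [integral_add hlin (hsq.const_mul _), integral_sub (integrable_const _)
        (hinner.const_mul η), integral_const, integral_const_mul, integral_const_mul]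
      simp
    _ = _ := by
      rw [integral_inner_const_add hn hn_mean, integral_norm_const_add_sq hn hn_mean hn_sq]

theorem descent_lemma_biased_noisy_general
    {d : ℕ} {Ω : Type*} [MeasurableSpace Ω] (μ : Measure Ω) [IsProbabilityMeasure μ]
    (F : EuclideanSpace ℝ (Fin d) → ℝ) (L : ℝ) (hL : 0 < L)
    (hdiff : Differentiable ℝ F)
    (hlip : ∀ x y, ‖gradient F x - gradient F y‖ ≤ L * ‖x - y‖)
    (w : EuclideanSpace ℝ (Fin d)) (b : EuclideanSpace ℝ (Fin d))
    (n : Ω → EuclideanSpace ℝ (Fin d))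
    (M σ2 m ζ2 η : ℝ) (hM : 0 ≤ M)
    (hn_int : Integrable n μ)
    (hn_mean : ∫ ω, n ω ∂μ = 0)
    (hn_sq_int : Integrable (fun ω => ‖n ω‖ ^ 2) μ)
    (hn_var : ∫ ω, ‖n ω‖ ^ 2 ∂μ ≤ M * ‖gradient F w + b‖ ^ 2 + σ2)
    (hb : ‖b‖ ^ 2 ≤ m * ‖gradient F w‖ ^ 2 + ζ2)
    (hη0 : 0 < η) (hη : η ≤ 1 / ((M + 1) * L))
    (hF_int : Integrable (fun ω => F (w - η • (gradient F w + b + n ω))) μ) :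
    (∫ ω, F (w - η • (gradient F w + b + n ω)) ∂μ) - F w ≤
      η * (m - 1) / 2 * ‖gradient F w‖ ^ 2 + η / 2 * ζ2 + η ^ 2 * L / 2 * σ2 := by
  set g := gradient F w
  have hdescent := integral_le_of_lipschitz_gradient_of_noisy_step hdiff hlip hn_int hn_mean
    hn_sq_int w (g + b) η hF_int
  have hstep : η * ((M + 1) * L) ≤ 1 := by
    rwa [le_div_iff₀ (by positivity)] at hη
  have hnoise : L * η ^ 2 / 2 * (‖g + b‖ ^ 2 + ∫ ω, ‖n ω‖ ^ 2 ∂μ)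
      ≤ η / 2 * ‖g + b‖ ^ 2 + η ^ 2 * L / 2 * σ2 := by
    have habsorb := mul_le_mul_of_nonneg_left hstep (by positivity : 0 ≤ η / 2 * ‖g + b‖ ^ 2)
    linarith [mul_le_mul_of_nonneg_left hn_var (by positivity : 0 ≤ L * η ^ 2 / 2)]
  have hbias : -(η * ⟪g, g + b⟫) + η / 2 * ‖g + b‖ ^ 2 = η / 2 * (‖b‖ ^ 2 - ‖g‖ ^ 2) := by
    rw [inner_add_right, real_inner_self_eq_norm_sq, norm_add_sq_real]
    ring
  linarith [mul_le_mul_of_nonneg_left hb (by positivity : 0 ≤ η / 2)]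

/-- Descent lemma with biased and noisy gradients. -/
theorem descent_lemma_biased_noisy
    {d : ℕ} {Ω : Type*} [MeasurableSpace Ω] (μ : Measure Ω) [IsProbabilityMeasure μ]
    (F : EuclideanSpace ℝ (Fin d) → ℝ) (L : ℝ) (hL : 0 < L)
    (hdiff : Differentiable ℝ F)
    (hlip : ∀ x y, ‖gradient F x - gradient F y‖ ≤ L * ‖x - y‖)
    (w : EuclideanSpace ℝ (Fin d)) (b : EuclideanSpace ℝ (Fin d))
    (n : Ω → EuclideanSpace ℝ (Fin d))
    (M σ2 m ζ2 η : ℝ) (hM : 0 ≤ M) (hσ2 : 0 ≤ σ2) (hm0 : 0 ≤ m) (hm1 : m < 1)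
    (hζ2 : 0 ≤ ζ2)
    (hn_int : Integrable n μ)
    (hn_mean : ∫ ω, n ω ∂μ = 0)
    (hn_sq_int : Integrable (fun ω => ‖n ω‖ ^ 2) μ)
    (hn_var : ∫ ω, ‖n ω‖ ^ 2 ∂μ ≤ M * ‖gradient F w + b‖ ^ 2 + σ2)
    (hb : ‖b‖ ^ 2 ≤ m * ‖gradient F w‖ ^ 2 + ζ2)
    (hη0 : 0 < η) (hη : η ≤ 1 / ((M + 1) * L))
    (hF_int : Integrable (fun ω => F (w - η • (gradient F w + b + n ω))) μ) :
    (∫ ω, F (w - η • (gradient F w + b + n ω)) ∂μ) - F w ≤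
      η * (m - 1) / 2 * ‖gradient F w‖ ^ 2 + η / 2 * ζ2 + η ^ 2 * L / 2 * σ2 :=
  descent_lemma_biased_noisy_general μ F L hL hdiff hlip w b n M σ2 m ζ2 η hM hn_int hn_mean
    hn_sq_int hn_var hb hη0 hη hF_int
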